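/- arXiv:2001.10909 — 3 statements merged into one kernel-verified Lean document; each statement's English description precedes it below -/
import Mathlib

section
/- For all x > 0, K_0(x) ≤ √π · e^{-x} / √(2x), where K_0 is the modified Bessel function of the second kind of order 0. -/
open Real

lemma cosh_lower_bound (t : ℝ) (ht : 0 ≤ t) : 1 + t ^ 2 / 2 ≤ Real.cosh t := by
  have h1 : Real.cosh t = 1 + 2 * Real.sinh (t / 2) ^ 2 := by
    have h0 := Real.cosh_two_mul (t / 2)
    rw [show 2 * (t / 2) = t by ring] at h0
    rw [h0, Real.cosh_sq]; ring
  have hs : t / 2 ≤ Real.sinh (t / 2) := by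
    rcases eq_or_lt_of_le ht with h | h
    · simp [← h]
    · exact (Real.self_lt_sinh_iff.mpr (by linarith)).le
  have : (t / 2) ^ 2 ≤ Real.sinh (t / 2) ^ 2 := by
    apply pow_le_pow_left₀ (by positivity) hs
  rw [h1]; nlinarith

/-- Modified Bessel function of the second kind of order 0. -/
noncomputable def besselK0 (x : ℝ) : ℝ :=
  ∫ t in Set.Ioi (0 : ℝ), Real.exp (-x * Real.cosh t)

theorem besselK0_upper_bound :
    ∀ x : ℝ, 0 < x →
      besselK0 x ≤ Real.sqrt π * Real.exp (-x) / Real.sqrt (2 * x) := by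
  intro x hx
  set g : ℝ → ℝ := fun t => Real.exp (-x) * Real.exp (-(x / 2) * t ^ 2) with hg
  have hle : ∀ t ∈ Set.Ioi (0 : ℝ), Real.exp (-x * Real.cosh t) ≤ g t := by
    intro t ht
    simp only [hg, ← Real.exp_add]
    apply Real.exp_le_exp.mpr
    have := cosh_lower_bound t (le_of_lt ht)
    nlinarith
  have hgint : MeasureTheory.IntegrableOn g (Set.Ioi (0 : ℝ)) := by
    exact MeasureTheory.Integrable.const_mul
      (integrableOn_Ioi_exp_neg_mul_sq_iff.mpr (by linarith)) _
  have hfint : MeasureTheory.IntegrableOn (fun t => Real.exp (-x * Real.cosh t))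
      (Set.Ioi (0 : ℝ)) := by
    refine MeasureTheory.Integrable.mono hgint ?_ ?_
    · exact (Continuous.aestronglyMeasurable (by continuity)).restrict
    · filter_upwards [MeasureTheory.ae_restrict_mem measurableSet_Ioi] with t ht
      rw [Real.norm_eq_abs, abs_of_pos (Real.exp_pos _)]
      refine (hle t ht).trans ?_
      rw [Real.norm_eq_abs, abs_of_pos (by positivity)]
  have hmono : besselK0 x ≤ ∫ t in Set.Ioi (0 : ℝ), g t := by
    unfold besselK0
    exact MeasureTheory.setIntegral_mono_on hfint hgint measurableSet_Ioi hle
  have hcalc : (∫ t in Set.Ioi (0 : ℝ), g t)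
      = Real.exp (-x) * (Real.sqrt (π / (x / 2)) / 2) := by
    rw [hg, MeasureTheory.integral_const_mul, integral_gaussian_Ioi]
  have hsq : Real.sqrt (π / (x / 2)) / 2 = Real.sqrt π / Real.sqrt (2 * x) := by
    rw [show π / (x / 2) = 4 * (π / (2 * x)) by field_simp; ring,
      show (4 : ℝ) = 2 ^ 2 by norm_num, Real.sqrt_mul (by positivity),
      Real.sqrt_sq (by norm_num : (0:ℝ) ≤ 2), Real.sqrt_div pi_pos.le]; ring
  calc besselK0 x ≤ _ := hmono
    _ = _ := hcalc
    _ = Real.sqrt π * Real.exp (-x) / Real.sqrt (2 * x) := by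
        rw [hsq]; ring
end

section
/- For all y > 0, 4y K_0(2y) ≤ 2√π · y^{1/2} · e^{-2y}. -/
open Real

/-! Since `cosh t ≥ 1 + t² / 2` (from `cosh t = 1 + 2 sinh² (t / 2)` and `|sinh s| ≥ |s|`), the
integrand of `K₀(x)` is dominated by `e^{-x} e^{-x t² / 2}`, whose integral over `(0, ∞)` is
`√(π / (2x)) e^{-x}`, the leading term of the asymptotics of `K₀`. -/

open MeasureTheory

lemma one_add_sq_div_two_le_cosh (t : ℝ) : 1 + t ^ 2 / 2 ≤ cosh t := by
  have hsinh : (t / 2) ^ 2 ≤ sinh (t / 2) ^ 2 :=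
    sq_le_sq.2 (by rw [abs_sinh]; exact self_le_sinh_iff.2 (abs_nonneg _))
  have hcosh : cosh t = 1 + 2 * sinh (t / 2) ^ 2 := by
    have h := cosh_two_mul (t / 2)
    rw [mul_div_cancel₀ t two_ne_zero] at h
    rw [h, cosh_sq]
    ring
  nlinarith

lemma exp_neg_mul_cosh_le {x : ℝ} (hx : 0 ≤ x) (t : ℝ) :
    exp (-x * cosh t) ≤ exp (-x) * exp (-(x / 2) * t ^ 2) := by
  rw [← exp_add, exp_le_exp]
  nlinarith [one_add_sq_div_two_le_cosh t]

lemma besselK0_le_sqrt_mul_exp {x : ℝ} (hx : 0 < x) :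
    besselK0 x ≤ √(π / (2 * x)) * exp (-x) := by
  have hgauss : ∫ t in Set.Ioi (0 : ℝ), exp (-x) * exp (-(x / 2) * t ^ 2)
      = √(π / (2 * x)) * exp (-x) := by
    rw [integral_const_mul, integral_gaussian_Ioi, div_div_eq_mul_div,
      show π * 2 / x = 2 ^ 2 * (π / (2 * x)) by field_simp,
      sqrt_mul (sq_nonneg 2), sqrt_sq zero_le_two]
    ring
  rw [besselK0, ← hgauss]
  refine integral_mono_of_nonneg (ae_of_all _ fun t => (exp_pos _).le) ?_
    (ae_of_all _ (exp_neg_mul_cosh_le hx.le))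
  exact ((integrable_exp_neg_mul_sq (half_pos hx)).const_mul _).restrict

theorem density_upper_bound :
    ∀ y : ℝ, 0 < y →
      4 * y * besselK0 (2 * y) ≤ 2 * Real.sqrt π * Real.sqrt y * Real.exp (-2 * y) := by
  intro y hy
  calc 4 * y * besselK0 (2 * y) ≤ 4 * y * (√(π / (2 * (2 * y))) * exp (-(2 * y))) := by
        gcongr; exact besselK0_le_sqrt_mul_exp (by positivity)
    _ = 2 * √π * √y * exp (-2 * y) := by
        have hsqrt : √(π / (2 * (2 * y))) = √π / (2 * √y) := by
          rw [sqrt_div' _ (by positivity), show 2 * (2 * y) = 2 ^ 2 * y by ring,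
            sqrt_mul (sq_nonneg 2), sqrt_sq zero_le_two]
        have hy' : 0 < √y := sqrt_pos.2 hy
        rw [hsqrt, neg_mul]
        field_simp
        rw [sq_sqrt hy.le]
        ring
end

section
/- For z > 0 and real y: (1/√π) ∫_0^∞ z^{−1/2} e^{−x²/z − z} dz = e^{−2|x|} for every real x; consequently ∫_0^∞ ∫_{−∞}^y (1/√(πz)) e^{−x²/z} dx · e^{−z} dz = ∫_{−∞}^y e^{−2|x|} dx. -/
/-!
Substituting `z = t ^ 2` turns `∫₀^∞ z^(-1/2) e^(-a/z - z) dz` into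
`2 e^(-2√a) ∫₀^∞ e^(-(t - √a/t)²) dt`. The Cauchy–Schlömilch substitution `u = t - c/t` maps
`(0, ∞)` bijectively onto `ℝ` with `du = (1 + c/t²) dt`, and the inversion `t ↦ c/t` shows that
the two summands of `1 + c/t²` contribute equally; hence the last integral is half the Gaussian
integral, `√π/2`. The second identity follows from the first by Fubini.
-/

open Real MeasureTheory Set

section CauchySchlomilch

variable {E : Type*} [NormedAddCommGroup E] [NormedSpace ℝ E] {c : ℝ}

theorem hasDerivAt_sub_div (c : ℝ) {t : ℝ} (ht : t ≠ 0) :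
    HasDerivAt (fun t => t - c / t) (1 + c / t ^ 2) t := by
  have hinv : HasDerivAt (fun t => c / t) (-(c / t ^ 2)) t := by
    simpa [div_eq_mul_inv] using (hasDerivAt_inv ht).const_mul c
  exact ((hasDerivAt_id' t).sub hinv).congr_deriv (sub_neg_eq_add _ _)

theorem injOn_sub_div (hc : 0 ≤ c) : InjOn (fun t : ℝ => t - c / t) (Ioi 0) := by
  intro a (ha : 0 < a) b (hb : 0 < b) hab
  have hfactor : (a - b) * (a * b + c) = 0 := by
    field_simp at hab
    linear_combination hab
  have : a * b + c ≠ 0 := by positivity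
  linarith [(mul_eq_zero.mp hfactor).resolve_right this]

theorem image_sub_div_Ioi (hc : 0 < c) : (fun t : ℝ => t - c / t) '' Ioi 0 = univ := by
  refine eq_univ_of_forall fun u => ?_
  -- the positive root of `t ^ 2 - u * t - c = 0`
  set s := √(u ^ 2 + 4 * c)
  have hs : s ^ 2 = u ^ 2 + 4 * c := sq_sqrt (by positivity)
  have hsu : |u| < s := by
    rw [← sqrt_sq_eq_abs]
    exact sqrt_lt_sqrt (sq_nonneg u) (by linarith)
  have hpos : 0 < (u + s) / 2 := by linarith [neg_abs_le u]
  refine ⟨(u + s) / 2, hpos, ?_⟩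
  have : u + s ≠ 0 := by linarith
  field_simp
  linear_combination hs

theorem integral_Ioi_comp_const_div (hc : 0 < c) (h : ℝ → E) :
    ∫ t in Ioi 0, (c / t ^ 2) • h (c / t) = ∫ t in Ioi 0, h t := by
  have hderiv : ∀ t ∈ Ioi (0 : ℝ), HasDerivWithinAt (fun t => c / t) (-(c / t ^ 2)) (Ioi 0) t :=
    fun t ht => by
      simpa [div_eq_mul_inv] using ((hasDerivAt_inv (ne_of_gt ht)).const_mul c).hasDerivWithinAt
  have hinj : InjOn (fun t : ℝ => c / t) (Ioi 0) := fun a _ b _ hab =>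
    inv_injective (mul_left_cancel₀ hc.ne' hab)
  have himage : (fun t : ℝ => c / t) '' Ioi 0 = Ioi 0 := by
    refine (image_subset_iff.mpr fun t (ht : 0 < t) => div_pos hc ht).antisymm
      fun u (hu : 0 < u) => ⟨c / u, div_pos hc hu, by field_simp⟩
  conv_rhs => rw [← himage, integral_image_eq_integral_abs_deriv_smul measurableSet_Ioi hderiv hinj]
  refine setIntegral_congr_fun measurableSet_Ioi fun t (ht : 0 < t) => ?_
  rw [abs_neg, abs_of_pos (by positivity)]

theorem integral_Ioi_comp_sub_div_of_even {f : ℝ → E} (hf : Integrable f)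
    (heven : ∀ u, f (-u) = f u) (hc : 0 < c) :
    (2 : ℝ) • ∫ t in Ioi 0, f (t - c / t) = ∫ u, f u := by
  have hderiv : ∀ t ∈ Ioi (0 : ℝ),
      HasDerivWithinAt (fun t => t - c / t) (1 + c / t ^ 2) (Ioi 0) t :=
    fun t ht => (hasDerivAt_sub_div c (ne_of_gt ht)).hasDerivWithinAt
  have habs : ∀ t : ℝ, |1 + c / t ^ 2| = 1 + c / t ^ 2 := fun t => abs_of_pos (by positivity)
  have hsubst : ∫ t in Ioi 0, (1 + c / t ^ 2) • f (t - c / t) = ∫ u, f u := by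
    have := integral_image_eq_integral_abs_deriv_smul measurableSet_Ioi hderiv
      (injOn_sub_div hc.le) f
    rw [image_sub_div_Ioi hc, setIntegral_univ] at this
    simpa only [habs] using this.symm
  have hint : IntegrableOn (fun t => (1 + c / t ^ 2) • f (t - c / t)) (Ioi 0) := by
    have := (integrableOn_image_iff_integrableOn_abs_deriv_smul measurableSet_Ioi hderiv
      (injOn_sub_div hc.le) f).mp (by rw [image_sub_div_Ioi hc]; exact hf.integrableOn)
    simpa only [habs] using this
  have hinv : ∫ t in Ioi 0, (c / t ^ 2) • f (t - c / t) = ∫ t in Ioi 0, f (t - c / t) := by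
    conv_rhs => rw [← integral_Ioi_comp_const_div hc]
    refine setIntegral_congr_fun measurableSet_Ioi fun t (ht : 0 < t) => ?_
    have : c / t - c / (c / t) = -(t - c / t) := by field_simp; ring
    rw [this, heven]
  have hint₁ : IntegrableOn (fun t => f (t - c / t)) (Ioi 0) := by
    have := hint.bdd_smul 1 (φ := fun t => (1 + c / t ^ 2)⁻¹)
      (by fun_prop : Measurable _).aestronglyMeasurable <| ae_of_all _ fun t => by
        rw [norm_inv, Real.norm_eq_abs, habs]
        exact inv_le_one_of_one_le₀ (le_add_of_nonneg_right (by positivity))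
    refine this.congr (ae_of_all _ fun t => ?_)
    simp [smul_smul, inv_mul_cancel₀ (ne_of_gt (by positivity : (0 : ℝ) < 1 + c / t ^ 2))]
  have hint₂ : IntegrableOn (fun t => (c / t ^ 2) • f (t - c / t)) (Ioi 0) :=
    (hint.sub hint₁).congr (ae_of_all _ fun t => by simp [add_smul])
  rw [← hsubst]
  simp only [add_smul, one_smul]
  rw [integral_add hint₁ hint₂, hinv, two_smul]

end CauchySchlomilch

theorem integral_Ioi_exp_neg_sub_div_sq {c : ℝ} (hc : 0 ≤ c) :
    ∫ t in Ioi 0, exp (-(t - c / t) ^ 2) = √π / 2 := by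
  rcases hc.eq_or_lt with rfl | hc
  · simpa using integral_gaussian_Ioi 1
  · have := integral_Ioi_comp_sub_div_of_even (f := fun u => exp (-u ^ 2))
      (by simpa using integrable_exp_neg_mul_sq one_pos) (fun u => by simp) hc
    rw [smul_eq_mul, (by simpa using integral_gaussian 1 : ∫ u, exp (-u ^ 2) = √π)] at this
    linarith

theorem integral_Ioi_rpow_neg_half_mul_exp_neg_div_sub {a : ℝ} (ha : 0 ≤ a) :
    ∫ z in Ioi 0, z ^ (-(1 : ℝ) / 2) * exp (-a / z - z) = √π * exp (-2 * √a) := by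
  rw [← integral_comp_rpow_Ioi_of_pos two_pos]
  have hsquare : ∀ t ∈ Ioi (0 : ℝ),
      (2 * t ^ ((2 : ℝ) - 1)) •
          ((t ^ (2 : ℝ)) ^ (-(1 : ℝ) / 2) * exp (-a / t ^ (2 : ℝ) - t ^ (2 : ℝ)))
        = 2 * exp (-2 * √a) * exp (-(t - √a / t) ^ 2) := by
    intro t (ht : 0 < t)
    have hpow : (t ^ (2 : ℝ)) ^ (-(1 : ℝ) / 2) = t⁻¹ := by
      rw [← rpow_mul ht.le]; norm_num [rpow_neg_one]
    have hsub : t ^ ((2 : ℝ) - 1) = t := by norm_num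
    have hcomplete : -a / t ^ 2 - t ^ 2 = -2 * √a + -(t - √a / t) ^ 2 := by
      field_simp
      linear_combination sq_sqrt ha
    rw [hpow, hsub, rpow_two, hcomplete, exp_add, smul_eq_mul]
    field_simp
  rw [setIntegral_congr_fun measurableSet_Ioi hsquare, integral_const_mul,
    integral_Ioi_exp_neg_sub_div_sq (sqrt_nonneg a)]
  ring

theorem integrable_exp_neg_mul_abs {b : ℝ} (hb : 0 < b) :
    Integrable fun x : ℝ => exp (-b * |x|) := by
  refine Integrable.of_integral_ne_zero ?_
  rw [integral_comp_abs (f := fun x => exp (-b * x)), integral_exp_mul_Ioi (neg_lt_zero.mpr hb)]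
  simp [hb.ne']

theorem integral_Ioi_rpow_neg_half_mul_exp_neg_sq_div_sub (x : ℝ) :
    ∫ z in Ioi 0, z ^ (-(1 : ℝ) / 2) * exp (-x ^ 2 / z - z) = √π * exp (-2 * |x|) := by
  rw [integral_Ioi_rpow_neg_half_mul_exp_neg_div_sub (sq_nonneg x), sqrt_sq_eq_abs]

theorem integrable_rpow_neg_half_mul_exp_neg_sq_div_sub (s : Set ℝ) :
    Integrable (Function.uncurry fun z x : ℝ => z ^ (-(1 : ℝ) / 2) * exp (-x ^ 2 / z - z))
      ((volume.restrict (Ioi 0)).prod (volume.restrict s)) := by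
  have hmeas : AEStronglyMeasurable
      (Function.uncurry fun z x : ℝ => z ^ (-(1 : ℝ) / 2) * exp (-x ^ 2 / z - z))
      ((volume.restrict (Ioi 0)).prod (volume.restrict s)) :=
    (by fun_prop : Measurable _).aestronglyMeasurable
  -- each `z`-section integrates to `√π * exp (-2 * |x|) ≠ 0`, so it is integrable
  refine (integrable_prod_iff' hmeas).mpr
    ⟨ae_of_all _ fun x => Integrable.of_integral_ne_zero ?_, ?_⟩
  · simp only [Function.uncurry_apply_pair, integral_Ioi_rpow_neg_half_mul_exp_neg_sq_div_sub]
    positivity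
  · have hnorm : ∀ x, ∫ z in Ioi 0, ‖z ^ (-(1 : ℝ) / 2) * exp (-x ^ 2 / z - z)‖
        = √π * exp (-2 * |x|) := fun x => by
      rw [← integral_Ioi_rpow_neg_half_mul_exp_neg_sq_div_sub]
      exact setIntegral_congr_fun measurableSet_Ioi fun z (hz : 0 < z) =>
        norm_of_nonneg (by positivity)
    simp only [Function.uncurry_apply_pair, hnorm]
    exact ((integrable_exp_neg_mul_abs two_pos).const_mul √π).integrableOn

theorem gaussian_exponential_mixture_is_laplace :
    (∀ x : ℝ,
      (1 / Real.sqrt π) *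
          ∫ z in Set.Ioi (0 : ℝ), z ^ (-(1 : ℝ) / 2) * Real.exp (-x ^ 2 / z - z)
        = Real.exp (-2 * |x|)) ∧
    (∀ y : ℝ,
      ∫ z in Set.Ioi (0 : ℝ),
          (∫ x in Set.Iic y, (1 / Real.sqrt (π * z)) * Real.exp (-x ^ 2 / z)) *
            Real.exp (-z)
        = ∫ x in Set.Iic y, Real.exp (-2 * |x|)) := by
  have hmixture : ∀ x : ℝ,
      (1 / √π) * ∫ z in Ioi 0, z ^ (-(1 : ℝ) / 2) * exp (-x ^ 2 / z - z) = exp (-2 * |x|) := by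
    intro x
    rw [integral_Ioi_rpow_neg_half_mul_exp_neg_sq_div_sub]
    field_simp
  refine ⟨hmixture, fun y => ?_⟩
  have hkernel : ∀ z ∈ Ioi (0 : ℝ),
      (∫ x in Iic y, (1 / √(π * z)) * exp (-x ^ 2 / z)) * exp (-z)
        = (1 / √π) * ∫ x in Iic y, z ^ (-(1 : ℝ) / 2) * exp (-x ^ 2 / z - z) := by
    intro z (hz : 0 < z)
    rw [← integral_mul_const, ← integral_const_mul]
    congr 1 with x
    have hrpow : z ^ (-(1 : ℝ) / 2) = (√z)⁻¹ := by
      rw [sqrt_eq_rpow, ← rpow_neg hz.le]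
      norm_num
    rw [sqrt_mul pi_pos.le, hrpow, sub_eq_add_neg, exp_add]
    field_simp
  rw [setIntegral_congr_fun measurableSet_Ioi hkernel, integral_const_mul,
    integral_integral_swap (integrable_rpow_neg_half_mul_exp_neg_sq_div_sub (Iic y)),
    ← integral_const_mul]
  simp only [hmixture]
end
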